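/- Let (𝒞,J) and (𝒟,K) be small sites, ℰ = Sheaf J and ℱ = Sheaf K the corresponding categories of Type-valued sheaves, each equipped with its canonical Grothendieck topology (the finest topology for which every representable presheaf is a sheaf). Let p : ℱ ⥤ ℰ be a functor preserving all small colimits which is a comorphism of sites from (ℱ, canonical topology) to (ℰ, canonical topology). Then p is a local fibration (with respect to these canonical topologies) if and only if p is a fibration in the Street sense. -/

import Mathlib

open CategoryTheory Limits

universe w u

/-- A morphism `f : d' ⟶ d` is cartesian for a functor `p : 𝒟 ⥤ 𝒞`. -/
def IsCartesianFor {D : Type*} [Category D] {C : Type*} [Category C] (p : D ⥤ C)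
    {d' d : D} (f : d' ⟶ d) : Prop :=
  ∀ {d'' : D} (g : d'' ⟶ d) (h : p.obj d'' ⟶ p.obj d'),
    h ≫ p.map f = p.map g → ∃! h' : d'' ⟶ d', p.map h' = h ∧ h' ≫ f = g

/-- A functor `p : 𝒟 ⥤ 𝒞` is a fibration in the Street sense. -/
def IsStreetFibration {D : Type*} [Category D] {C : Type*} [Category C] (p : D ⥤ C) : Prop :=
  ∀ (d : D) (c : C) (f : c ⟶ p.obj d),
    ∃ (d' : D) (fhat : d' ⟶ d) (σ : p.obj d' ≅ c),
      IsCartesianFor p fhat ∧ p.map fhat = σ.hom ≫ f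

/-- A morphism `f : d' ⟶ d` is `K`-locally cartesian for `p : 𝒟 ⥤ 𝒞`. -/
def LocallyCartesian {D : Type*} [Category D] {C : Type*} [Category C]
    (K : GrothendieckTopology D) (p : D ⥤ C) {d' d : D} (f : d' ⟶ d) : Prop :=
  (∀ (d'' : D) (g : d'' ⟶ d) (h : p.obj d'' ⟶ p.obj d'),
      h ≫ p.map f = p.map g →
      ∃ S : Sieve d'', S ∈ K d'' ∧
        ∀ {e : D} (v : e ⟶ d''), S.arrows v →
          ∃ hv : e ⟶ d', p.map v ≫ h = p.map hv ∧ hv ≫ f = v ≫ g) ∧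
  (∀ (d'' : D) (h h' : d'' ⟶ d'), h ≫ f = h' ≫ f → p.map h = p.map h' →
      ∃ S : Sieve d'', S ∈ K d'' ∧ ∀ {e : D} (v : e ⟶ d''), S.arrows v → v ≫ h = v ≫ h')

/-- A functor `p : (𝒟, K) ⥤ (𝒞, J)` is a comorphism of sites. -/
def IsComorphismOfSites {D : Type*} [Category D] {C : Type*} [Category C] (p : D ⥤ C)
    (K : GrothendieckTopology D) (J : GrothendieckTopology C) : Prop :=
  ∀ (d : D) (S : Sieve (p.obj d)), S ∈ J (p.obj d) → S.functorPullback p ∈ K d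

/-- A comorphism of sites `p : (𝒟,K) ⟶ (𝒞,J)` is a local fibration if every morphism
`f : c ⟶ p(d)` can be locally factored through `K`-locally cartesian morphisms along a
`J`-covering family. -/
def IsLocalFibration {D : Type*} [Category D] {C : Type*} [Category C] (p : D ⥤ C)
    (K : GrothendieckTopology D) (J : GrothendieckTopology C) : Prop :=
  IsComorphismOfSites p K J ∧
    ∀ (d : D) (c : C) (f : c ⟶ p.obj d),
      ∃ (ι : Type w) (di : ι → D) (fi : ∀ i, p.obj (di i) ⟶ c) (fhat : ∀ i, di i ⟶ d),
        Sieve.generate (Presieve.ofArrows (fun i => p.obj (di i)) fi) ∈ J c ∧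
          ∀ i, LocallyCartesian K p (fhat i) ∧ fi i ≫ f = p.map (fhat i)

variable {Cs Ds : Type u} [SmallCategory Cs] [SmallCategory Ds]

/-!
For a left adjoint `p ⊣ u` and `f : c ⟶ p d`, the pullback `d ×_{u (p d)} u c` is the universal
object `e` with maps `g : e ⟶ d` and `h : p e ⟶ c` such that `h ≫ f = p g`. Its projection to `d`
is cartesian as soon as the comparison map `σ : p (d ×_{u (p d)} u c) ⟶ c` is invertible, and
colimit-preserving functors between sheaf toposes have right adjoints.

Covering sieves of a subcanonical topology are jointly epimorphic and glue morphisms, and a left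
adjoint carries them to jointly epimorphic families; hence locally cartesian morphisms are
cartesian. For a local fibration, the arrows of a covering family of `f` factor through `σ`, so `σ`
is epi; locally, every generalized element of `p (d ×_{u (p d)} u c)` lies in the image of `p`,
and cartesianness of the covering lifts determines it locally by its composite with `σ`, so `σ` is
mono. Toposes are balanced, so `σ` is an isomorphism. Conversely, a Street fibration is a local
fibration with singleton covering families.
-/

universe v

namespace CategoryTheory

namespace GrothendieckTopology

variable {C : Type*} [Category C] {J : GrothendieckTopology C} [J.Subcanonical]

lemma hom_ext_of_mem {X Z : C} {S : Sieve X} (hS : S ∈ J X) {α β : X ⟶ Z}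
    (h : ∀ ⦃Y : C⦄ (v : Y ⟶ X), S v → v ≫ α = v ≫ β) : α = β :=
  (Subcanonical.isSheaf_of_isRepresentable (CategoryTheory.yoneda.obj Z) S hS).isSeparatedFor.ext h

lemma eq_of_equalizer_mem {X Z : C} {α β : X ⟶ Z} (h : Sieve.equalizer α β ∈ J X) : α = β :=
  hom_ext_of_mem h fun _ _ hv => hv

lemma epi_of_mem_of_forall_factors {X c : C} (σ : X ⟶ c) {S : Sieve c} (hS : S ∈ J c)
    (h : ∀ ⦃Y : C⦄ (v : Y ⟶ c), S v → ∃ w : Y ⟶ X, w ≫ σ = v) : Epi σ where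
  left_cancellation α β hαβ := hom_ext_of_mem hS fun Y v hv => by
    obtain ⟨w, rfl⟩ := h v hv
    simp only [Category.assoc, hαβ]

end GrothendieckTopology

lemma Functor.hom_ext_of_mem_of_isLeftAdjoint {C D : Type*} [Category C] [Category D]
    {p : D ⥤ C} [p.IsLeftAdjoint] {K : GrothendieckTopology D} [K.Subcanonical] {X : D}
    {S : Sieve X} (hS : S ∈ K X) {Z : C} {α β : p.obj X ⟶ Z}
    (h : ∀ ⦃Y : D⦄ (v : Y ⟶ X), S v → p.map v ≫ α = p.map v ≫ β) : α = β := by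
  let adj := Adjunction.ofIsLeftAdjoint p
  apply (adj.homEquiv _ _).injective
  refine K.hom_ext_of_mem hS fun Y v hv => ?_
  rw [← adj.homEquiv_naturality_left, ← adj.homEquiv_naturality_left, h v hv]

lemma GrothendieckTopology.W_functorInclusion {D : Type v} [SmallCategory D]
    {K : GrothendieckTopology D} {U : D} {S : Sieve U} (hS : S ∈ K U) :
    K.W S.functorInclusion := by
  have : Presheaf.IsLocallyInjective K S.functorInclusion :=
    Presheaf.isLocallyInjective_of_injective _ _ fun _ _ _ h => Subtype.ext h
  have : Presheaf.IsLocallySurjective K S.functorInclusion :=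
    ⟨fun s => K.superset_covering (fun _ g hg => ⟨⟨g ≫ s, hg⟩, rfl⟩) (K.pullback_stable s hS)⟩
  exact K.W_of_isLocallyBijective _

lemma Presheaf.isSheaf_of_adjunction {D E : Type*} [Category.{v} D] [Category E]
    {K : GrothendieckTopology D} {L : (Dᵒᵖ ⥤ Type v) ⥤ E} {R : E ⥤ Dᵒᵖ ⥤ Type v} (adj : L ⊣ R)
    (hL : ∀ ⦃U : D⦄ (S : Sieve U), S ∈ K U → IsIso (L.map S.functorInclusion)) (Z : E) :
    Presheaf.IsSheaf K (R.obj Z) := by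
  rw [isSheaf_iff_isSheaf_of_type]
  intro U S hS
  rw [Presieve.isSheafFor_iff_yonedaSheafCondition]
  have := hL S hS
  let e : (yoneda.obj U ⟶ R.obj Z) ≃ (S.functor ⟶ R.obj Z) := (adj.homEquiv _ _).symm.trans
    ((asIso (L.map S.functorInclusion)).symm.homFromEquiv.trans (adj.homEquiv _ _))
  have he (g) : e g = S.functorInclusion ≫ g := by
    simp [e, Adjunction.homEquiv_naturality_left]
  intro φ
  refine ⟨e.symm φ, (he _).symm.trans (e.apply_symm_apply φ), fun g hg => ?_⟩
  rw [← hg, ← he, e.symm_apply_apply]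

lemma Sheaf.isLeftAdjoint_of_preservesColimits {C D : Type u} [SmallCategory C]
    [SmallCategory D] {J : GrothendieckTopology C} {K : GrothendieckTopology D}
    (F : Sheaf K (Type u) ⥤ Sheaf J (Type u)) [PreservesColimitsOfSize.{u, u} F] :
    F.IsLeftAdjoint := by
  let L := presheafToSheaf K (Type u) ⋙ F
  have : PreservesColimitsOfSize.{u, u} (presheafToSheaf K (Type u)) :=
    (sheafificationAdjunction K (Type u)).leftAdjoint_preservesColimits
  have : L.IsLeftAdjoint := Presheaf.isLeftAdjoint_of_preservesColimits.{0} L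
  let adj := Adjunction.ofIsLeftAdjoint L
  have hR := Presheaf.isSheaf_of_adjunction adj fun U S hS =>
    have := (K.W_iff _).1 (K.W_functorInclusion hS)
    inferInstanceAs (IsIso (F.map _))
  exact (adj.restrictFullyFaithful (R := ObjectProperty.lift _ L.rightAdjoint hR)
    (fullyFaithfulSheafToPresheaf K _) (Functor.FullyFaithful.id _)
    (Functor.isoWhiskerRight (asIso (sheafificationAdjunction K (Type u)).counit) F)
    (Iso.refl _)).isLeftAdjoint

end CategoryTheory

section Cartesian

variable {C D : Type*} [Category C] [Category D] {p : D ⥤ C} {d' d : D} {f : d' ⟶ d}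

lemma IsCartesianFor.hom_ext (hf : IsCartesianFor p f) {e : D} {h h' : e ⟶ d'}
    (hcomp : h ≫ f = h' ≫ f) (hmap : p.map h = p.map h') : h = h' := by
  obtain ⟨_, -, huniq⟩ := hf (h ≫ f) (p.map h) (p.map_comp h f).symm
  exact (huniq h ⟨rfl, rfl⟩).trans (huniq h' ⟨hmap.symm, hcomp.symm⟩).symm

lemma IsCartesianFor.locallyCartesian (hf : IsCartesianFor p f) (K : GrothendieckTopology D) :
    LocallyCartesian K p f := by
  refine ⟨fun e g h hcomp => ?_, fun e h h' hcomp hmap =>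
    ⟨⊤, K.top_mem e, fun v _ => by rw [hf.hom_ext hcomp hmap]⟩⟩
  obtain ⟨h', ⟨hmap, hcomp'⟩, -⟩ := hf g h hcomp
  exact ⟨⊤, K.top_mem e, fun v _ =>
    ⟨v ≫ h', by rw [p.map_comp, hmap], by rw [Category.assoc, hcomp']⟩⟩

variable {K : GrothendieckTopology D} [K.Subcanonical]

lemma LocallyCartesian.hom_ext (hf : LocallyCartesian K p f) {e : D} {h h' : e ⟶ d'}
    (hcomp : h ≫ f = h' ≫ f) (hmap : p.map h = p.map h') : h = h' := by
  obtain ⟨S, hS, hv⟩ := hf.2 e h h' hcomp hmap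
  exact K.hom_ext_of_mem hS fun _ v hv' => hv v hv'

lemma LocallyCartesian.isCartesianFor [p.IsLeftAdjoint] (hf : LocallyCartesian K p f) :
    IsCartesianFor p f := by
  intro e g h hcomp
  obtain ⟨S, hS, hlift⟩ := hf.1 e g h hcomp
  choose lift hlift_map hlift_comp using fun Y (v : Y ⟶ e) (hv : S v) => hlift v hv
  have hcompat : Presieve.FamilyOfElements.Compatible
      (P := yoneda.obj d') (R := S.arrows) fun Y v hv => lift Y v hv := by
    intro Y₁ Y₂ W g₁ g₂ v₁ v₂ hv₁ hv₂ hw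
    change g₁ ≫ lift _ v₁ hv₁ = g₂ ≫ lift _ v₂ hv₂
    apply hf.hom_ext
    · rw [Category.assoc, Category.assoc, hlift_comp, hlift_comp, reassoc_of% hw]
    · rw [p.map_comp, p.map_comp, ← hlift_map, ← hlift_map, ← p.map_comp_assoc, hw,
        p.map_comp_assoc]
  obtain ⟨h', hh', -⟩ :=
    GrothendieckTopology.Subcanonical.isSheaf_of_isRepresentable (yoneda.obj d') S hS _ hcompat
  replace hh' : ∀ ⦃Y⦄ (v : Y ⟶ e) (hv : S v), v ≫ h' = lift Y v hv := hh'
  have hh'_comp : h' ≫ f = g := K.hom_ext_of_mem hS fun Y v hv => by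
    rw [← Category.assoc, hh' v hv, hlift_comp]
  have hh'_map : p.map h' = h := Functor.hom_ext_of_mem_of_isLeftAdjoint hS fun Y v hv => by
    rw [← p.map_comp, hh' v hv, hlift_map]
  exact ⟨h', ⟨hh'_map, hh'_comp⟩, fun ψ ⟨hψ_map, hψ_comp⟩ =>
    hf.hom_ext (hψ_comp.trans hh'_comp.symm) (hψ_map.trans hh'_map.symm)⟩

end Cartesian

lemma IsStreetFibration.isLocalFibration {C D : Type*} [Category C] [Category D] {p : D ⥤ C}
    {K : GrothendieckTopology D} {J : GrothendieckTopology C}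
    (hcomorph : IsComorphismOfSites p K J) (hp : IsStreetFibration p) :
    IsLocalFibration.{w} p K J := by
  refine ⟨hcomorph, fun d c f => ?_⟩
  obtain ⟨d', fhat, σ, hcart, hfac⟩ := hp d c f
  refine ⟨PUnit, fun _ => d', fun _ => σ.hom, fun _ => fhat, ?_,
    fun _ => ⟨hcart.locallyCartesian K, hfac.symm⟩⟩
  rw [Sieve.generate_of_contains_isSplitEpi σ.hom (Presieve.ofArrows.mk PUnit.unit)]
  exact J.top_mem c

namespace CategoryTheory.Adjunction

variable {C D : Type*} [Category C] [Category D] {p : D ⥤ C} {u : C ⥤ D} (adj : p ⊣ u)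
  [HasPullbacks D] {c : C} {d : D} (f : c ⟶ p.obj d)

noncomputable abbrev liftObj : D := pullback (adj.unit.app d) (u.map f)

noncomputable abbrev liftHom : adj.liftObj f ⟶ d := pullback.fst _ _

noncomputable abbrev liftComparison : p.obj (adj.liftObj f) ⟶ c :=
  (adj.homEquiv _ _).symm (pullback.snd _ _)

lemma map_comp_liftComparison {e : D} (ψ : e ⟶ adj.liftObj f) :
    p.map ψ ≫ adj.liftComparison f = (adj.homEquiv _ _).symm (ψ ≫ pullback.snd _ _) :=
  (adj.homEquiv_naturality_left_symm _ _).symm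

lemma liftComparison_comp : adj.liftComparison f ≫ f = p.map (adj.liftHom f) := by
  apply (adj.homEquiv _ _).injective
  rw [adj.homEquiv_naturality_right, Equiv.apply_symm_apply,
    ← pullback.condition, adj.homEquiv_unit]
  exact adj.unit.naturality (adj.liftHom f)

lemma hom_ext_liftObj {e : D} {ψ ψ' : e ⟶ adj.liftObj f}
    (hcomp : ψ ≫ adj.liftHom f = ψ' ≫ adj.liftHom f)
    (hmap : p.map ψ ≫ adj.liftComparison f = p.map ψ' ≫ adj.liftComparison f) : ψ = ψ' := by
  refine pullback.hom_ext hcomp ((adj.homEquiv _ _).symm.injective ?_)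
  rwa [← map_comp_liftComparison, ← map_comp_liftComparison]

lemma exists_hom_liftObj {e : D} (g : e ⟶ d) (h : p.obj e ⟶ c) (hgh : h ≫ f = p.map g) :
    ∃ ψ : e ⟶ adj.liftObj f, ψ ≫ adj.liftHom f = g ∧ p.map ψ ≫ adj.liftComparison f = h := by
  have hsq : g ≫ adj.unit.app d = adj.homEquiv _ _ h ≫ u.map f := by
    rw [← adj.homEquiv_naturality_right, hgh, adj.homEquiv_unit]
    exact adj.unit.naturality g
  exact ⟨pullback.lift g _ hsq, pullback.lift_fst _ _ _,
    by rw [map_comp_liftComparison, pullback.lift_snd, Equiv.symm_apply_apply]⟩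

lemma isCartesianFor_liftHom [IsIso (adj.liftComparison f)] :
    IsCartesianFor p (adj.liftHom f) := by
  intro e g h hgh
  obtain ⟨ψ, hψ_comp, hψ_map⟩ := adj.exists_hom_liftObj f g (h ≫ adj.liftComparison f)
    (by rw [Category.assoc, liftComparison_comp, hgh])
  rw [cancel_mono] at hψ_map
  exact ⟨ψ, ⟨hψ_map, hψ_comp⟩, fun ψ' ⟨hψ'_map, hψ'_comp⟩ =>
    adj.hom_ext_liftObj f (hψ'_comp.trans hψ_comp.symm) (by rw [hψ'_map, hψ_map])⟩

lemma map_eq_comp_map_of_isCartesianFor {d₀ : D} {fhat : d₀ ⟶ d}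
    (hfhat : IsCartesianFor p fhat) {m : d₀ ⟶ adj.liftObj f} (hm : m ≫ adj.liftHom f = fhat)
    {e : D} (w : e ⟶ adj.liftObj f) (g : p.obj e ⟶ p.obj d₀)
    (hw : p.map w ≫ adj.liftComparison f = g ≫ p.map m ≫ adj.liftComparison f) :
    p.map w = g ≫ p.map m := by
  obtain ⟨w₀, ⟨hw₀_map, hw₀_comp⟩, -⟩ := hfhat (w ≫ adj.liftHom f) g (by
    rw [← hm, p.map_comp, p.map_comp, ← liftComparison_comp, reassoc_of% hw])
  have : w₀ ≫ m = w := adj.hom_ext_liftObj f (by rw [Category.assoc, hm, hw₀_comp])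
    (by rw [p.map_comp, Category.assoc, hw₀_map, hw])
  rw [← this, p.map_comp, hw₀_map]

variable {J : GrothendieckTopology C}

lemma equalizer_mem_of_isLocalFibration {K : GrothendieckTopology D}
    (hp : IsLocalFibration.{w} p K J) {d₀ : D} {fhat : d₀ ⟶ d} (hfhat : IsCartesianFor p fhat)
    {m : d₀ ⟶ adj.liftObj f} (hm : m ≫ adj.liftHom f = fhat) {E : C}
    (x : E ⟶ p.obj (adj.liftObj f)) (g : E ⟶ p.obj d₀)
    (hx : x ≫ adj.liftComparison f = g ≫ p.map m ≫ adj.liftComparison f) :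
    Sieve.equalizer x (g ≫ p.map m) ∈ J E := by
  obtain ⟨_, b, χ, xh, hcov, hχ⟩ := hp.2 _ E x
  refine J.superset_covering (fun Y v hv => ?_) hcov
  obtain ⟨i, a, rfl⟩ := (Sieve.mem_ofArrows_iff _ _ _).1 hv
  have := adj.map_eq_comp_map_of_isCartesianFor f hfhat hm (xh i) (χ i ≫ g)
    (by rw [← (hχ i).2, Category.assoc, hx, Category.assoc])
  simp only [Sieve.equalizer_apply, Category.assoc, (hχ i).2, this]

variable {ι : Type*} {di : ι → D} {fi : ∀ i, p.obj (di i) ⟶ c} {fhat : ∀ i, di i ⟶ d}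

lemma epi_liftComparison [J.Subcanonical]
    (hcov : Sieve.generate (Presieve.ofArrows _ fi) ∈ J c)
    (hfac : ∀ i, fi i ≫ f = p.map (fhat i)) : Epi (adj.liftComparison f) := by
  refine J.epi_of_mem_of_forall_factors _ hcov fun Y v hv => ?_
  obtain ⟨i, a, rfl⟩ := (Sieve.mem_ofArrows_iff _ _ _).1 hv
  obtain ⟨m, -, hm⟩ := adj.exists_hom_liftObj f (fhat i) (fi i) (hfac i)
  exact ⟨a ≫ p.map m, by rw [Category.assoc, hm]⟩

lemma mono_liftComparison [J.Subcanonical] {K : GrothendieckTopology D}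
    (hp : IsLocalFibration.{w} p K J) (hcov : Sieve.generate (Presieve.ofArrows _ fi) ∈ J c)
    (hcart : ∀ i, IsCartesianFor p (fhat i)) (hfac : ∀ i, fi i ≫ f = p.map (fhat i)) :
    Mono (adj.liftComparison f) := by
  choose m hm_comp hm_map using fun i => adj.exists_hom_liftObj f (fhat i) (fi i) (hfac i)
  refine ⟨fun {E} x y hxy => J.eq_of_equalizer_mem (J.transitive
    (J.pullback_stable (x ≫ adj.liftComparison f) hcov) _ fun Y t ht => ?_)⟩
  obtain ⟨i, a, ha⟩ := (Sieve.mem_ofArrows_iff _ _ _).1 ht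
  have hx : (t ≫ x) ≫ adj.liftComparison f = a ≫ p.map (m i) ≫ adj.liftComparison f := by
    rw [hm_map, Category.assoc, ha]
  have hy : (t ≫ y) ≫ adj.liftComparison f = a ≫ p.map (m i) ≫ adj.liftComparison f := by
    rw [Category.assoc, ← hxy, ← Category.assoc, hx]
  -- Locally on `E`, both `t ≫ x` and `t ≫ y` agree with `a ≫ p.map (m i)`.
  refine J.superset_covering ?_ (J.intersection_covering
    (adj.equalizer_mem_of_isLocalFibration f hp (hcart i) (hm_comp i) _ _ hx)
    (adj.equalizer_mem_of_isLocalFibration f hp (hcart i) (hm_comp i) _ _ hy))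
  rintro Z s ⟨hsx, hsy⟩
  simp only [Sieve.equalizer_apply, Sieve.pullback_apply, Category.assoc] at hsx hsy ⊢
  rw [hsx, hsy]

end CategoryTheory.Adjunction

theorem IsLocalFibration.isStreetFibration {C D : Type*} [Category C] [Category D] [Balanced C]
    [HasPullbacks D] {p : D ⥤ C} [p.IsLeftAdjoint] {K : GrothendieckTopology D}
    {J : GrothendieckTopology C} [K.Subcanonical] [J.Subcanonical]
    (hp : IsLocalFibration.{w} p K J) : IsStreetFibration p := by
  intro d c f
  let adj := Adjunction.ofIsLeftAdjoint p
  obtain ⟨_, di, fi, fhat, hcov, hfhat⟩ := hp.2 d c f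
  have hcart i : IsCartesianFor p (fhat i) := (hfhat i).1.isCartesianFor
  have hfac i : fi i ≫ f = p.map (fhat i) := (hfhat i).2
  have := adj.epi_liftComparison f hcov hfac
  have := adj.mono_liftComparison f hp hcov hcart hfac
  have := isIso_of_mono_of_epi (adj.liftComparison f)
  exact ⟨_, _, asIso (adj.liftComparison f), adj.isCartesianFor_liftHom f,
    (adj.liftComparison_comp f).symm⟩

/-- A small-colimit-preserving comorphism of sites between sheaf toposes equipped with their
canonical topologies is a local fibration iff it is a fibration in the Street sense. -/
theorem localFibration_iff_streetFibration_of_toposes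
    (J : GrothendieckTopology Cs) (K : GrothendieckTopology Ds)
    (p : Sheaf K (Type u) ⥤ Sheaf J (Type u))
    [PreservesColimitsOfSize.{u, u} p]
    (hp : IsComorphismOfSites p (Sheaf.canonicalTopology (Sheaf K (Type u)))
      (Sheaf.canonicalTopology (Sheaf J (Type u)))) :
    IsLocalFibration.{u + 1} p (Sheaf.canonicalTopology (Sheaf K (Type u)))
        (Sheaf.canonicalTopology (Sheaf J (Type u))) ↔
      IsStreetFibration p := by
  have : p.IsLeftAdjoint := Sheaf.isLeftAdjoint_of_preservesColimits p
  exact ⟨IsLocalFibration.isStreetFibration, IsStreetFibration.isLocalFibration hp⟩
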